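/- Let u : ℝ² → ℝ² be C¹ with Fréchet derivative Du and divergence ∇·u = tr Du, and let v : ℝ² × ℝ → ℝ² be continuous. On an interval I ⊆ ℝ, let ȳ : I → ℝ² solve ȳ′(τ) = u(ȳ(τ)) and let x : I → ℝ² solve x′(τ) = u(x(τ)) + v(x(τ), τ). Then the function M(τ) := ⟨J u(ȳ(τ)), x(τ) − ȳ(τ)⟩ is differentiable on I, with M′(τ) = (∇·u)(ȳ(τ)) M(τ) + ⟨J u(ȳ(τ)), v(x(τ), τ)⟩ + ⟨J u(ȳ(τ)), u(x(τ)) − u(ȳ(τ)) − Du(ȳ(τ))(x(τ) − ȳ(τ))⟩ for every τ ∈ I. -/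

import Mathlib

open scoped InnerProductSpace

noncomputable section

/-- The plane with its Euclidean inner product. -/
abbrev E2 : Type := EuclideanSpace ℝ (Fin 2)

/-- Rotation by +π/2 : J(x₁,x₂) = (−x₂, x₁). -/
noncomputable def Jrot : E2 → E2 :=
  fun x => (WithLp.equiv 2 (Fin 2 → ℝ)).symm ![-(x 1), x 0]

/-- Divergence of a planar vector field, as the trace of its Fréchet derivative. -/
noncomputable def div2 (u : E2 → E2) (x : E2) : ℝ :=
  LinearMap.trace ℝ E2 (fderiv ℝ u x).toLinearMap

/-! ⟪J a, b⟫ is the determinant det(a, b). Differentiating M along the two flows gives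
det(Du(ȳ) u(ȳ), x − ȳ) + det(u(ȳ), u(x) + v − u(ȳ)), and the planar identity
det(A a, b) + det(a, A b) = tr A · det(a, b) turns the first term together with the linear part
Du(ȳ)(x − ȳ) of the second into (∇·u)(ȳ) M. -/

@[simp] lemma Jrot_apply_zero (a : E2) : Jrot a 0 = -a 1 := rfl

@[simp] lemma Jrot_apply_one (a : E2) : Jrot a 1 = a 0 := rfl

lemma inner_Jrot (a b : E2) : ⟪Jrot a, b⟫_ℝ = a 0 * b 1 - a 1 * b 0 := by
  simp only [PiLp.inner_apply, RCLike.inner_apply, conj_trivial, Fin.sum_univ_two,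
    Jrot_apply_zero, Jrot_apply_one]
  ring

def JrotL : E2 →L[ℝ] E2 :=
  LinearMap.toContinuousLinearMap
    { toFun := Jrot
      map_add' := fun a b => by ext i; fin_cases i <;> simp [add_comm]
      map_smul' := fun c a => by ext i; fin_cases i <;> simp }

@[simp] lemma coe_JrotL : ⇑JrotL = Jrot := rfl

lemma map_eq_smul_single_add_smul_single (A : E2 →ₗ[ℝ] E2) (a : E2) :
    A a = a 0 • A (EuclideanSpace.single 0 1) + a 1 • A (EuclideanSpace.single 1 1) := by
  conv_lhs => rw [← (EuclideanSpace.basisFun (Fin 2) ℝ).sum_repr a]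
  simp [Fin.sum_univ_two, EuclideanSpace.basisFun_apply]

lemma trace_eq_single_apply_add (A : E2 →ₗ[ℝ] E2) :
    LinearMap.trace ℝ E2 A =
      A (EuclideanSpace.single 0 1) 0 + A (EuclideanSpace.single 1 1) 1 := by
  simp [LinearMap.trace_eq_sum_inner A (EuclideanSpace.basisFun (Fin 2) ℝ), Fin.sum_univ_two,
    EuclideanSpace.basisFun_apply, EuclideanSpace.inner_single_left]

lemma inner_Jrot_map_add_inner_Jrot_map (A : E2 →ₗ[ℝ] E2) (a b : E2) :
    ⟪Jrot (A a), b⟫_ℝ + ⟪Jrot a, A b⟫_ℝ = LinearMap.trace ℝ E2 A * ⟪Jrot a, b⟫_ℝ := by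
  simp only [inner_Jrot, trace_eq_single_apply_add]
  rw [map_eq_smul_single_add_smul_single A a, map_eq_smul_single_add_smul_single A b]
  simp only [PiLp.add_apply, PiLp.smul_apply, smul_eq_mul]
  ring

theorem melnikov_evolution_general
    (u : E2 → E2) (hu : ContDiff ℝ 1 u)
    (v : E2 → ℝ → E2)
    (I : Set ℝ)
    (ybar : ℝ → E2) (x : ℝ → E2)
    (hybar : ∀ τ ∈ I, HasDerivWithinAt ybar (u (ybar τ)) I τ)
    (hx : ∀ τ ∈ I, HasDerivWithinAt x (u (x τ) + v (x τ) τ) I τ) :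
    ∀ τ ∈ I,
      HasDerivWithinAt (fun σ => ⟪Jrot (u (ybar σ)), x σ - ybar σ⟫_ℝ)
        (div2 u (ybar τ) * ⟪Jrot (u (ybar τ)), x τ - ybar τ⟫_ℝ
          + ⟪Jrot (u (ybar τ)), v (x τ) τ⟫_ℝ
          + ⟪Jrot (u (ybar τ)),
              u (x τ) - u (ybar τ) - fderiv ℝ u (ybar τ) (x τ - ybar τ)⟫_ℝ)
        I τ := by
  intro τ hτ
  set Du := fderiv ℝ u (ybar τ)
  have hu_ybar : HasDerivWithinAt (fun σ => u (ybar σ)) (Du (u (ybar τ))) I τ :=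
    (hu.differentiable one_ne_zero (ybar τ)).hasFDerivAt.comp_hasDerivWithinAt τ (hybar τ hτ)
  have hM := (JrotL.hasFDerivAt.comp_hasDerivWithinAt τ hu_ybar).inner ℝ
    ((hx τ hτ).sub (hybar τ hτ))
  refine hM.congr_deriv ?_
  have hdiv := inner_Jrot_map_add_inner_Jrot_map Du (u (ybar τ)) (x τ - ybar τ)
  simp only [div2, coe_JrotL, Function.comp_apply, Pi.sub_apply, ContinuousLinearMap.coe_coe,
    inner_sub_right, inner_add_right] at hdiv ⊢
  linarith

/-- **Exact evolution equation for the Melnikov-type displacement function.**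
If on an interval `I` the curve `ȳ` solves the steady flow `ȳ′ = u(ȳ)` and `x`
solves the agitated flow `x′ = u(x) + v(x,τ)`, then
`M(τ) = ⟨J u(ȳ(τ)), x(τ) − ȳ(τ)⟩` is differentiable on `I` with
`M′ = (∇·u)(ȳ) M + ⟨J u(ȳ), v(x,τ)⟩ + ⟨J u(ȳ), u(x) − u(ȳ) − Du(ȳ)(x − ȳ)⟩`. -/
theorem melnikov_evolution
    (u : E2 → E2) (hu : ContDiff ℝ 1 u)
    (v : E2 → ℝ → E2) (hv : Continuous (Function.uncurry v))
    (I : Set ℝ) (hI : I.OrdConnected)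
    (ybar : ℝ → E2) (x : ℝ → E2)
    (hybar : ∀ τ ∈ I, HasDerivWithinAt ybar (u (ybar τ)) I τ)
    (hx : ∀ τ ∈ I, HasDerivWithinAt x (u (x τ) + v (x τ) τ) I τ) :
    ∀ τ ∈ I,
      HasDerivWithinAt (fun σ => ⟪Jrot (u (ybar σ)), x σ - ybar σ⟫_ℝ)
        (div2 u (ybar τ) * ⟪Jrot (u (ybar τ)), x τ - ybar τ⟫_ℝ
          + ⟪Jrot (u (ybar τ)), v (x τ) τ⟫_ℝ
          + ⟪Jrot (u (ybar τ)),
              u (x τ) - u (ybar τ) - fderiv ℝ u (ybar τ) (x τ - ybar τ)⟫_ℝ)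
        I τ :=
  melnikov_evolution_general u hu v I ybar x hybar hx
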